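/- Let q ≥ 2 and k ≥ 2 be integers and set n = (q^{k−1} − 1)/(q − 1). Let α be a nonzero element of Z_q of additive order d, and let c ∈ S_{k−1}(q) be a codeword all of whose coordinates lie in the cyclic subgroup ⟨α⟩ of (Z_q, +) generated by α. Then the codeword (α, c + α·𝟏, c + 2α·𝟏, …, c + (q−1)α·𝟏) of M_{k,k−1}(q) has Hamming weight 1 + (q − 1)·n − (q/d)·n + z(c), where z(c) is the number of zero coordinates of c. -/

import Mathlib

/-- Hamming weight of a word over `ZMod q`: the number of nonzero coordinates. -/
def wt {q : ℕ} (l : List (ZMod q)) : ℕ := l.countP (fun x => decide (x ≠ 0))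

/-- The word `(c, α, c + α·𝟏, c + 2α·𝟏, …, c + (q−1)α·𝟏)`, where `𝟏` is the
all-ones vector of the same length as `c`. -/
def simplexWord (q : ℕ) (α : ZMod q) (c : List (ZMod q)) : List (ZMod q) :=
  c ++ α :: (List.range (q - 1)).flatMap (fun i => c.map (fun x => x + ((i + 1 : ℕ) : ZMod q) * α))

/-- The `ZMod q`-Simplex code `S_k(q)` of dimension `k`, as a set of words (lists):
`S_1(q) = ZMod q` (as length-1 words) and
`S_k(q) = {(c, α, c + α·𝟏, …, c + (q−1)α·𝟏) : c ∈ S_{k-1}(q), α ∈ ZMod q}`. -/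
def simplex (q : ℕ) : ℕ → Set (List (ZMod q))
  | 0 => {[]}
  | k + 1 => {w | ∃ c ∈ simplex q k, ∃ α : ZMod q, w = simplexWord q α c}

/-- The word `(α, c + α·𝟏, c + 2α·𝟏, …, c + (q−1)α·𝟏)`. -/
def macWord (q : ℕ) (α : ZMod q) (c : List (ZMod q)) : List (ZMod q) :=
  α :: (List.range (q - 1)).flatMap (fun i => c.map (fun x => x + ((i + 1 : ℕ) : ZMod q) * α))

/-- The `ZMod q`-MacDonald code `M_{k,k-1}(q)`, as a set of words:
`M_{k,k-1}(q) = {(α, c + α·𝟏, …, c + (q−1)α·𝟏) : α ∈ ZMod q, c ∈ S_{k-1}(q)}`. -/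
def macdonald (q k : ℕ) : Set (List (ZMod q)) :=
  {w | ∃ α : ZMod q, ∃ c ∈ simplex q (k - 1), w = macWord q α c}

/-!
For `x ∈ ⟨α⟩` the solutions `j ∈ {0, …, q - 1}` of `x + jα = 0` form one residue class modulo
`d = addOrderOf α`, and `d ∣ q`, so there are exactly `q / d` of them. Reading the word
`(α, c + α·𝟏, …, c + (q−1)α·𝟏)` column by column, the coordinate `x` of `c` therefore
contributes `(q - 1) - q / d + [x = 0]` nonzero entries (the solution `j = 0` exists iff
`x = 0`). Summing over the `n` coordinates of `c`, where `n = 1 + q + ⋯ + q^(k-2)` by the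
recursion defining the simplex code, and adding the nonzero leading `α` gives the weight.
-/

theorem List.sum_map_ite_eq_countP {α : Type*} (p : α → Bool) (m : List α) :
    (m.map fun i => if p i then 1 else 0).sum = m.countP p := by
  induction m with
  | nil => rfl
  | cons i m ih => simp [List.countP_cons, ih, add_comm]

theorem List.countP_flatMap_map {α β γ : Type*} (p : γ → Bool) (f : α → β → γ) (m : List α)
    (l : List β) :
    (m.flatMap fun i => l.map (f i)).countP p =
      (l.map fun x => m.countP fun i => p (f i x)).sum := by
  rw [List.countP_flatMap]
  induction l with
  | nil => simp [Function.comp_def]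
  | cons x l ih =>
    simp only [Function.comp_def, List.map_cons, List.countP_cons, List.sum_map_add,
      List.sum_cons] at ih ⊢
    rw [ih, List.sum_map_ite_eq_countP (fun i => p (f i x)), add_comm]

theorem Nat.count_nsmul_eq {G : Type*} [AddLeftCancelMonoid G] [DecidableEq G] {a y : G}
    (hy : y ∈ AddSubmonoid.multiples a) {n : ℕ} (hn : addOrderOf a ∣ n) :
    Nat.count (fun j => j • a = y) n = n / addOrderOf a := by
  obtain ⟨m, rfl⟩ := hy
  rcases (addOrderOf a).eq_zero_or_pos with h0 | hpos
  · simp [h0, zero_dvd_iff.mp (h0 ▸ hn)]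
  simp_rw [nsmul_eq_nsmul_iff_modEq]
  simp [Nat.count_modEq_card n hpos, Nat.mod_eq_zero_of_dvd hn]

theorem Nat.count_add_count_not (p : ℕ → Prop) [DecidablePred p] (n : ℕ) :
    Nat.count p n + Nat.count (fun k => ¬p k) n = n := by
  simpa [Nat.count] using
    (List.length_eq_countP_add_countP (fun k => decide (p k)) (l := List.range n)).symm

namespace ZMod

variable {q : ℕ} [NeZero q] {α x : ZMod q}

theorem addOrderOf_dvd (α : ZMod q) : addOrderOf α ∣ q := by
  simpa using addOrderOf_dvd_card (x := α)

theorem count_add_natCast_mul_ne_zero (hx : x ∈ AddSubgroup.zmultiples α) :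
    Nat.count (fun i => x + ((i + 1 : ℕ) : ZMod q) * α ≠ 0) (q - 1) + q / addOrderOf α =
      q - 1 + if x = 0 then 1 else 0 := by
  have hneg : -x ∈ AddSubmonoid.multiples α :=
    (isOfFinAddOrder_of_finite α).mem_multiples_iff_mem_zmultiples.mpr (neg_mem hx)
  have hcount := Nat.count_nsmul_eq hneg (addOrderOf_dvd α)
  have hsolve : ∀ k : ℕ, k • α = -x ↔ x + (k : ZMod q) * α = 0 := fun k => by
    rw [nsmul_eq_mul, eq_neg_iff_add_eq_zero, add_comm]
  obtain ⟨n, hn⟩ : ∃ n, q = n + 1 := Nat.exists_eq_succ_of_ne_zero (NeZero.ne q)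
  simp only [hsolve] at hcount
  have hshift := Nat.count_succ' (fun j => x + (j : ZMod q) * α = 0) n
  have hsplit := Nat.count_add_count_not (fun i => x + ((i + 1 : ℕ) : ZMod q) * α = 0) n
  simp only [Nat.cast_zero, zero_mul, add_zero, ← hn] at hshift
  rw [show q - 1 = n by omega]
  simp only [ne_eq]
  omega

theorem sum_map_count_add_natCast_mul_ne_zero {c : List (ZMod q)}
    (hc : ∀ x ∈ c, x ∈ AddSubgroup.zmultiples α) :
    (c.map fun x => Nat.count (fun i => x + ((i + 1 : ℕ) : ZMod q) * α ≠ 0) (q - 1)).sum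
        + q / addOrderOf α * c.length = (q - 1) * c.length + c.count 0 := by
  induction c with
  | nil => simp
  | cons x c ih =>
    have hx := count_add_natCast_mul_ne_zero (hc x List.mem_cons_self)
    have hrest := ih fun y hy => hc y (List.mem_cons_of_mem x hy)
    simp only [List.map_cons, List.sum_cons, List.length_cons, List.count_cons, beq_iff_eq]
    grind

theorem div_addOrderOf_le_sub_one (hα : α ≠ 0) : q / addOrderOf α ≤ q - 1 := by
  have hpos : 0 < q := Nat.pos_of_neZero q
  have htwo : 2 ≤ addOrderOf α := by
    have : addOrderOf α ≠ 1 := fun h => hα (AddMonoid.addOrderOf_eq_one_iff.mp h)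
    have := addOrderOf_pos α
    omega
  have := Nat.div_le_div_left htwo two_pos (a := q)
  omega

end ZMod

theorem length_simplexWord {q : ℕ} [NeZero q] (α : ZMod q) (c : List (ZMod q)) :
    (simplexWord q α c).length = q * c.length + 1 := by
  obtain ⟨p, rfl⟩ : ∃ p, q = p + 1 := Nat.exists_eq_succ_of_ne_zero (NeZero.ne q)
  simp only [simplexWord, List.length_append, List.length_cons, List.length_flatMap,
    List.length_map, List.map_const', List.sum_replicate, List.length_range, smul_eq_mul,
    Nat.add_sub_cancel]
  ring

theorem length_of_mem_simplex {q : ℕ} [NeZero q] {m : ℕ} {c : List (ZMod q)}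
    (hc : c ∈ simplex q m) : c.length = ∑ i ∈ Finset.range m, q ^ i := by
  induction m generalizing c with
  | zero => simp_all [simplex]
  | succ m ih =>
    obtain ⟨c, hc, β, rfl⟩ := hc
    rw [length_simplexWord, ih hc, geom_sum_succ]

theorem wt_macWord {q : ℕ} {α : ZMod q} (hα : α ≠ 0) (c : List (ZMod q)) :
    wt (macWord q α c) =
      (c.map fun x => Nat.count (fun i => x + ((i + 1 : ℕ) : ZMod q) * α ≠ 0) (q - 1)).sum + 1 := by
  simp only [wt, macWord, List.countP_cons, List.countP_flatMap_map, ne_eq, hα,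
    not_false_eq_true, decide_true, if_true]
  rfl

theorem macdonald_subgroup_weight_general (q k : ℕ) (hq : 2 ≤ q)
    (α : ZMod q) (hα : α ≠ 0) (d : ℕ) (hd : addOrderOf α = d)
    (c : List (ZMod q)) (hc : c ∈ simplex q (k - 1))
    (hcoord : ∀ x ∈ c, x ∈ AddSubgroup.zmultiples α) :
    wt (macWord q α c) =
      1 + (q - 1) * ((q ^ (k - 1) - 1) / (q - 1))
        - (q / d) * ((q ^ (k - 1) - 1) / (q - 1)) + c.count 0 := by
  subst hd
  have : NeZero q := ⟨by omega⟩
  have hn : (q ^ (k - 1) - 1) / (q - 1) = c.length := by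
    rw [length_of_mem_simplex hc, Nat.geomSum_eq hq]
  have hsum := ZMod.sum_map_count_add_natCast_mul_ne_zero hcoord
  have hle := Nat.mul_le_mul_right c.length (ZMod.div_addOrderOf_le_sub_one hα)
  rw [hn, wt_macWord hα]
  omega

/-- For a nonzero `α ∈ ZMod q` of additive order `d` and `c ∈ S_{k−1}(q)` all of
whose coordinates lie in the additive subgroup `⟨α⟩`, the codeword
`(α, c + α·𝟏, …, c + (q−1)α·𝟏)` of `M_{k,k−1}(q)` has Hamming weight
`1 + (q − 1)·n − (q/d)·n + z(c)`, where `n = (q^{k−1} − 1)/(q − 1)` and `z(c)` is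
the number of zero coordinates of `c`. -/
theorem macdonald_subgroup_weight (q k : ℕ) (hq : 2 ≤ q) (hk : 2 ≤ k)
    (α : ZMod q) (hα : α ≠ 0) (d : ℕ) (hd : addOrderOf α = d)
    (c : List (ZMod q)) (hc : c ∈ simplex q (k - 1))
    (hcoord : ∀ x ∈ c, x ∈ AddSubgroup.zmultiples α) :
    wt (macWord q α c) =
      1 + (q - 1) * ((q ^ (k - 1) - 1) / (q - 1))
        - (q / d) * ((q ^ (k - 1) - 1) / (q - 1)) + c.count 0 :=
  macdonald_subgroup_weight_general q k hq α hα d hd c hc hcoord
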